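/- arXiv:1904.05178 — 4 statements merged into one kernel-verified Lean document; each statement's English description precedes it below -/
import Mathlib

section
/- Let D ∈ ℝ^{n_r×n_p}, d ∈ ℝ^{n_r}, P ∈ ℝ^{n_p×n_p}, θ ∈ ℝ^{n_p}, ψ ∈ ℝ^{n_p}, and z ∈ ℝ. Assume DP = 0, Dθ = d, and ψᵀPψ + 1 ≠ 0. Define the recursive least-squares update K = Pψ/(ψᵀPψ + 1), θ⁺ = θ + K(z − ψᵀθ), P⁺ = (I_{n_p} − Kψᵀ)P. Then DK = 0, Dθ⁺ = d, and DP⁺ = 0; i.e., one step of recursive least squares preserves both the constraint on the parameter estimate and the annihilation of the covariance by the constraint matrix. -/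
open Matrix

/-- One step of recursive least squares preserves both the constraint `Dθ = d` on the
parameter estimate and the annihilation `DP = 0` of the covariance, and the gain
satisfies `DK = 0`. -/
theorem stmt_5 {np nr : ℕ}
    (D : Matrix (Fin nr) (Fin np) ℝ) (d : Fin nr → ℝ)
    (P : Matrix (Fin np) (Fin np) ℝ) (θ : Fin np → ℝ)
    (ψ : Fin np → ℝ) (z : ℝ)
    (hDP : D * P = 0) (hDθ : D.mulVec θ = d)
    (hden : ψ ⬝ᵥ P.mulVec ψ + 1 ≠ 0)
    (K : Fin np → ℝ) (hK : K = (ψ ⬝ᵥ P.mulVec ψ + 1)⁻¹ • P.mulVec ψ)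
    (θplus : Fin np → ℝ) (hθplus : θplus = θ + (z - ψ ⬝ᵥ θ) • K)
    (Pplus : Matrix (Fin np) (Fin np) ℝ)
    (hPplus : Pplus = (1 - vecMulVec K ψ) * P) :
    D.mulVec K = 0 ∧ D.mulVec θplus = d ∧ D * Pplus = 0 := by
  have hDPψ : D.mulVec (P.mulVec ψ) = 0 := by
    rw [mulVec_mulVec, hDP, zero_mulVec]
  have hDK : D.mulVec K = 0 := by
    rw [hK, mulVec_smul, hDPψ, smul_zero]
  refine ⟨hDK, ?_, ?_⟩
  · rw [hθplus, mulVec_add, hDθ, mulVec_smul, hDK, smul_zero, add_zero]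
  · rw [hPplus, ← Matrix.mul_assoc, Matrix.mul_sub, Matrix.mul_one,
      Matrix.sub_mul, hDP]
    have : D * vecMulVec K ψ = vecMulVec (D.mulVec K) ψ := by
      ext i j
      simp [Matrix.mul_apply, mulVec, dotProduct, vecMulVec_apply,
        Finset.sum_mul, mul_assoc]
    rw [this, hDK]
    ext i j
    simp [vecMulVec_apply, Matrix.mul_apply]
end

section
/- Let D ∈ ℝ^{n_r×n_p} and d ∈ ℝ^{n_r}. Let θ̂_0 ∈ ℝ^{n_p} and P_0 ∈ ℝ^{n_p×n_p} satisfy Dθ̂_0 = d and DP_0 = 0. Let ψ : ℕ → ℝ^{n_p} and z : ℕ → ℝ be arbitrary regressor and output sequences, and define recursively for k ≥ 1: K_k = P_{k−1}ψ_{k−1}/(ψᵀ_{k−1}P_{k−1}ψ_{k−1} + 1), θ̂_k = θ̂_{k−1} + K_k(z_k − ψᵀ_{k−1}θ̂_{k−1}), P_k = (I_{n_p} − K_kψᵀ_{k−1})P_{k−1}, assuming ψᵀ_{k−1}P_{k−1}ψ_{k−1} + 1 ≠ 0 for all k. Then for every k ≥ 0 the recursive least-squares estimates satisfy the time-invariant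 constraint Dθ̂_k = d (and moreover DP_k = 0 and DK_k = 0 for all k). -/
open Matrix

/-- If the recursive least-squares iteration is initialized with `Dθ̂₀ = d` and `DP₀ = 0`,
then for every `k` the estimates satisfy `Dθ̂ₖ = d`, and moreover `DPₖ = 0` and `DKₖ = 0`. -/
theorem stmt_6 {np nr : ℕ}
    (D : Matrix (Fin nr) (Fin np) ℝ) (d : Fin nr → ℝ)
    (θ : ℕ → Fin np → ℝ) (P : ℕ → Matrix (Fin np) (Fin np) ℝ)
    (K : ℕ → Fin np → ℝ)
    (ψ : ℕ → Fin np → ℝ) (z : ℕ → ℝ)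
    (hθ0 : D.mulVec (θ 0) = d) (hP0 : D * P 0 = 0)
    (hden : ∀ k, ψ k ⬝ᵥ (P k).mulVec (ψ k) + 1 ≠ 0)
    (hK : ∀ k, K (k + 1) = (ψ k ⬝ᵥ (P k).mulVec (ψ k) + 1)⁻¹ • (P k).mulVec (ψ k))
    (hθ : ∀ k, θ (k + 1) = θ k + (z (k + 1) - ψ k ⬝ᵥ θ k) • K (k + 1))
    (hP : ∀ k, P (k + 1) = (1 - vecMulVec (K (k + 1)) (ψ k)) * P k) :
    (∀ k, D.mulVec (θ k) = d) ∧ (∀ k, D * P k = 0) ∧ (∀ k, D.mulVec (K (k + 1)) = 0) := by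
  have hPall : ∀ k, D * P k = 0 := by
    intro k
    induction k with
    | zero => exact hP0
    | succ k ih =>
      have hKz : D.mulVec (K (k + 1)) = 0 := by
        rw [hK k, mulVec_smul, mulVec_mulVec, ih, zero_mulVec, smul_zero]
      have hvv : D * vecMulVec (K (k + 1)) (ψ k) = 0 := by
        ext i j
        have h0 := congrFun hKz i
        simp only [mulVec, dotProduct, Pi.zero_apply] at h0
        simp only [vecMulVec_apply, Matrix.mul_apply, Pi.zero_apply, Matrix.zero_apply,
          ← mul_assoc, ← Finset.sum_mul, h0, zero_mul]
      rw [hP k, ← Matrix.mul_assoc, Matrix.mul_sub, Matrix.mul_one, hvv, sub_zero, ih]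
  have hKall : ∀ k, D.mulVec (K (k + 1)) = 0 := by
    intro k
    rw [hK k, mulVec_smul, mulVec_mulVec, hPall k, zero_mulVec, smul_zero]
  refine ⟨?_, hPall, hKall⟩
  intro k
  induction k with
  | zero => exact hθ0
  | succ k ih =>
    rw [hθ k, mulVec_add, mulVec_smul, hKall k, smul_zero, add_zero, ih]
end

section
/- Let Ψ ∈ ℝ^{N×n_p} with ΨᵀΨ positive definite, D ∈ ℝ^{n_r×n_p} with linearly independent rows (so DDᵀ and D(ΨᵀΨ)^{-1}Dᵀ are invertible), Z ∈ ℝ^N, and d ∈ ℝ^{n_r}. For μ > 0 the matrix ΨᵀΨ + μDᵀD is positive definite, hence invertible, and the relaxed estimator θ̂_rCLS(μ) = (ΨᵀΨ + μDᵀD)^{-1}(ΨᵀZ + μDᵀd) is well defined. Then θ̂_rCLS(μ) converges, as μ → ∞, to the equality-constrained least-squares estimator θ̂_CLS = 𝒫θ̂_LS + (I_{n_p} − 𝒫)d̄, where θ̂_LS = (ΨᵀΨ)^{-1}ΨᵀZ, 𝒫 = I_{n_p} − LD, L = (ΨᵀΨ)^{-1}Dᵀ[D(ΨᵀΨ)^{-1}Dᵀ]^{-1},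 and d̄ = Dᵀ(DDᵀ)^{-1}d. -/
/-!
Write `A = ΨᵀΨ` and `G = D A⁻¹ Dᵀ`. For `μ > 0` the push-through identity
`(A + μDᵀD) A⁻¹Dᵀ = μDᵀ (μ⁻¹I + G)` rewrites the relaxed estimator as
`θ̂_LS − A⁻¹Dᵀ(μ⁻¹I + G)⁻¹(Dθ̂_LS − d)`. This depends continuously on `μ⁻¹` near `0`, since `G`
is invertible, and at `μ⁻¹ = 0` it is `θ̂_LS − L(Dθ̂_LS − d)`, which is `θ̂_CLS` because `Dd̄ = d`.
-/

open Matrix Filter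

namespace Matrix

variable {m n : Type*} [Fintype m] [Fintype n]

lemma PosDef.mul_mul_transpose_of_linearIndependent {A : Matrix n n ℝ} (hA : A.PosDef)
    {B : Matrix m n ℝ} (hB : LinearIndependent ℝ B.row) : (B * A * Bᵀ).PosDef := by
  simpa using hA.mul_mul_conjTranspose_same (vecMul_injective_iff.mpr hB)

variable [DecidableEq m] [DecidableEq n] {K : Type*} [Field K]

lemma add_smul_transpose_mul_mul_inv_smul_one_add {A : Matrix n n K} (hA : IsUnit A.det)
    (D : Matrix m n K) {μ : K} (hμ : μ ≠ 0) (hS : IsUnit (μ⁻¹ • 1 + D * A⁻¹ * Dᵀ).det) :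
    (A + μ • (Dᵀ * D)) * (A⁻¹ * Dᵀ * (μ⁻¹ • 1 + D * A⁻¹ * Dᵀ)⁻¹) = μ • Dᵀ := by
  have hfactor : (A + μ • (Dᵀ * D)) * (A⁻¹ * Dᵀ) = μ • Dᵀ * (μ⁻¹ • 1 + D * A⁻¹ * Dᵀ) := by
    rw [Matrix.add_mul, ← Matrix.mul_assoc, mul_nonsing_inv _ hA, Matrix.one_mul, Matrix.mul_add,
      Matrix.mul_smul, Matrix.mul_one, smul_smul, inv_mul_cancel₀ hμ, one_smul, Matrix.smul_mul,
      Matrix.smul_mul]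
    simp only [Matrix.mul_assoc]
  rw [← Matrix.mul_assoc, hfactor, Matrix.mul_assoc, mul_nonsing_inv _ hS, Matrix.mul_one]

lemma inv_add_smul_transpose_mul_mulVec {A : Matrix n n K} (hA : IsUnit A.det)
    (D : Matrix m n K) {μ : K} (hμ : μ ≠ 0) (hS : IsUnit (μ⁻¹ • 1 + D * A⁻¹ * Dᵀ).det)
    (hM : IsUnit (A + μ • (Dᵀ * D)).det) (θ : n → K) (d : m → K) :
    (A + μ • (Dᵀ * D))⁻¹ *ᵥ (A *ᵥ θ + μ • Dᵀ *ᵥ d) =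
      θ - (A⁻¹ * Dᵀ * (μ⁻¹ • 1 + D * A⁻¹ * Dᵀ)⁻¹) *ᵥ (D *ᵥ θ - d) := by
  have hmul : (A + μ • (Dᵀ * D)) *ᵥ (θ - (A⁻¹ * Dᵀ * (μ⁻¹ • 1 + D * A⁻¹ * Dᵀ)⁻¹) *ᵥ (D *ᵥ θ - d))
      = A *ᵥ θ + μ • Dᵀ *ᵥ d := by
    rw [mulVec_sub, mulVec_mulVec, add_smul_transpose_mul_mul_inv_smul_one_add hA D hμ hS,
      add_mulVec, smul_mulVec, smul_mulVec, ← mulVec_mulVec, mulVec_sub, smul_sub]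
    abel
  rw [← hmul, mulVec_mulVec, nonsing_inv_mul _ hM, one_mulVec]

lemma tendsto_inv_inv_smul_one_add {G : Matrix m m ℝ} (hG : IsUnit G.det) :
    Tendsto (fun μ : ℝ => (μ⁻¹ • (1 : Matrix m m ℝ) + G)⁻¹) atTop (nhds G⁻¹) := by
  have hinv : ContinuousAt Inv.inv G :=
    continuousAt_matrix_inv G <| by
      rw [Ring.inverse_eq_inv']
      exact continuousAt_inv₀ (isUnit_iff_ne_zero.mp hG)
  have hshift : Tendsto (fun μ : ℝ => μ⁻¹ • (1 : Matrix m m ℝ) + G) atTop (nhds G) := by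
    simpa using ((tendsto_inv_atTop_zero (𝕜 := ℝ)).smul_const (1 : Matrix m m ℝ)).add_const G
  exact hinv.tendsto.comp hshift

end Matrix

/-- For `μ > 0` the matrix `ΨᵀΨ + μDᵀD` is positive definite (hence invertible), so the
relaxed estimator `θ̂_rCLS(μ) = (ΨᵀΨ + μDᵀD)⁻¹(ΨᵀZ + μDᵀd)` is well defined, and as
`μ → ∞` it converges to the equality-constrained least-squares estimator
`θ̂_CLS = 𝒫θ̂_LS + (I − 𝒫)d̄`. -/
theorem stmt_13 {N np nr : ℕ}
    (Ψ : Matrix (Fin N) (Fin np) ℝ) (D : Matrix (Fin nr) (Fin np) ℝ)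
    (Z : Fin N → ℝ) (d : Fin nr → ℝ)
    (hΨ : (Ψᵀ * Ψ).PosDef)
    (hD : LinearIndependent ℝ (fun i : Fin nr => D i))
    (θLS : Fin np → ℝ) (hθLS : θLS = ((Ψᵀ * Ψ)⁻¹ * Ψᵀ).mulVec Z)
    (L : Matrix (Fin np) (Fin nr) ℝ)
    (hL : L = (Ψᵀ * Ψ)⁻¹ * Dᵀ * (D * (Ψᵀ * Ψ)⁻¹ * Dᵀ)⁻¹)
    (P : Matrix (Fin np) (Fin np) ℝ) (hP : P = 1 - L * D)
    (dbar : Fin np → ℝ) (hdbar : dbar = (Dᵀ * (D * Dᵀ)⁻¹).mulVec d)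
    (θCLS : Fin np → ℝ) (hθCLS : θCLS = P.mulVec θLS + (1 - P).mulVec dbar) :
    IsUnit (D * Dᵀ) ∧ IsUnit (D * (Ψᵀ * Ψ)⁻¹ * Dᵀ) ∧
    (∀ μ : ℝ, 0 < μ → (Ψᵀ * Ψ + μ • (Dᵀ * D)).PosDef) ∧
    Tendsto
      (fun μ : ℝ =>
        ((Ψᵀ * Ψ + μ • (Dᵀ * D))⁻¹).mulVec (Ψᵀ.mulVec Z + μ • Dᵀ.mulVec d))
      atTop (nhds θCLS) := by
  set A := Ψᵀ * Ψ
  have hA : IsUnit A.det := hΨ.det_pos.ne'.isUnit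
  have hG : (D * A⁻¹ * Dᵀ).PosDef := hΨ.inv.mul_mul_transpose_of_linearIndependent hD
  have hDDt : (D * Dᵀ).PosDef := by
    simpa using PosDef.one.mul_mul_transpose_of_linearIndependent hD
  have hM (μ : ℝ) (hμ : 0 < μ) : (A + μ • (Dᵀ * D)).PosDef :=
    hΨ.add_posSemidef (by simpa using (posSemidef_conjTranspose_mul_self D).smul hμ.le)
  refine ⟨hDDt.isUnit, hG.isUnit, hM, ?_⟩
  have hAθ : A *ᵥ θLS = Ψᵀ *ᵥ Z := by
    rw [hθLS, mulVec_mulVec, ← Matrix.mul_assoc, mul_nonsing_inv _ hA, Matrix.one_mul]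
  have hDdbar : D *ᵥ dbar = d := by
    rw [hdbar, mulVec_mulVec, ← Matrix.mul_assoc, mul_nonsing_inv _ hDDt.det_pos.ne'.isUnit,
      one_mulVec]
  have hθCLS_eq : θCLS = θLS - (A⁻¹ * Dᵀ * (D * A⁻¹ * Dᵀ)⁻¹) *ᵥ (D *ᵥ θLS - d) := by
    rw [hθCLS, hP, ← hL, sub_sub_cancel, sub_mulVec, one_mulVec, ← mulVec_mulVec,
      ← mulVec_mulVec, hDdbar, mulVec_sub]
    abel
  have hlim : Tendsto (fun μ : ℝ => (A⁻¹ * Dᵀ * (μ⁻¹ • 1 + D * A⁻¹ * Dᵀ)⁻¹) *ᵥ (D *ᵥ θLS - d))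
      atTop (nhds ((A⁻¹ * Dᵀ * (D * A⁻¹ * Dᵀ)⁻¹) *ᵥ (D *ᵥ θLS - d))) :=
    ((continuous_const.matrix_mul continuous_id).matrix_mulVec continuous_const |>.tendsto _).comp
      (tendsto_inv_inv_smul_one_add hG.det_pos.ne'.isUnit)
  rw [hθCLS_eq, ← hAθ]
  refine (tendsto_const_nhds.sub hlim).congr' ?_
  filter_upwards [eventually_gt_atTop 0] with μ hμ
  have hS : (μ⁻¹ • (1 : Matrix (Fin nr) (Fin nr) ℝ) + D * A⁻¹ * Dᵀ).PosDef :=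
    hG.posSemidef_add (PosSemidef.one.smul (inv_nonneg.mpr hμ.le))
  exact (inv_add_smul_transpose_mul_mulVec hA D hμ.ne' hS.det_pos.ne'.isUnit
    (hM μ hμ).det_pos.ne'.isUnit θLS d).symm
end

section
/- Let S ∈ ℝ^{n_r×n}, and let D = [[I_n ⊗ S, 0],[0, I_p ⊗ S]] and d = [vec(S); vec(0_{n_r×p})] be the vectorized constraint data. Let θ̂_0 ∈ ℝ^{n²+np} and P_0 ∈ ℝ^{(n²+np)×(n²+np)} satisfy Dθ̂_0 = d and DP_0 = 0, and let ψ : ℕ → ℝ^{n²+np}, z : ℕ → ℝ be arbitrary sequences. Run the recursive least-squares iteration K_k = P_{k−1}ψ_{k−1}/(ψᵀ_{k−1}P_{k−1}ψ_{k−1} + 1), θ̂_k = θ̂_{k−1} + K_k(z_k − ψᵀ_{k−1}θ̂_{k−1}), P_k = (I − K_kψᵀ_{k−1})P_{k−1}, assuming ψᵀ_{k−1}P_{k−1}ψ_{k−1} + 1 ≠ 0 for all k. Write θ̂_k = [vec(Â_k); vec(B̂_k)] with Â_k ∈ ℝ^{n×n}, B̂_k ∈ ℝ^{n×p}. Then for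 every k ≥ 0 the un-vectorized estimated state matrices satisfy S Â_k = S and S B̂_k = 0_{n_r×p}; i.e., every intermediate recursive estimate yields a state-space model compatible with the state equality constraint S x = s. -/
open Matrix Kronecker

/-- Column-stacking vectorization of a matrix: `vec M` is indexed by (column, row). -/
def vec {m n : Type*} (M : Matrix m n ℝ) : n × m → ℝ := fun p => M p.2 p.1

/-!
Every RLS increment of the estimate is `P_{k-1}` applied to a vector, and `P_k` is `P_{k-1}`
multiplied on the left, so `D P_k = 0` propagates from `D P_0 = 0` and keeps `D θ̂_k = D θ̂_0 = d`.
Since `(I ⊗ S) vec M = vec (S M)`, the block constraint `D θ̂_k = d` is exactly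
`vec (S Â_k) = vec S` and `vec (S B̂_k) = 0`.
-/

section RecursiveLeastSquares

variable {ι κ R : Type*} [Fintype ι] [DecidableEq ι] [Field R]

theorem rls_mulVec_eq_and_mul_eq_zero (D : Matrix κ ι R) (d : κ → R)
    (θ K ψ : ℕ → ι → R) (P : ℕ → Matrix ι ι R) (z : ℕ → R)
    (hθ0 : D *ᵥ θ 0 = d) (hP0 : D * P 0 = 0)
    (hK : ∀ k, K (k + 1) = (ψ k ⬝ᵥ P k *ᵥ ψ k + 1)⁻¹ • P k *ᵥ ψ k)
    (hθ : ∀ k, θ (k + 1) = θ k + (z (k + 1) - ψ k ⬝ᵥ θ k) • K (k + 1))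
    (hP : ∀ k, P (k + 1) = (1 - vecMulVec (K (k + 1)) (ψ k)) * P k) :
    ∀ k, D *ᵥ θ k = d ∧ D * P k = 0 := by
  intro k
  induction k with
  | zero => exact ⟨hθ0, hP0⟩
  | succ k ih =>
    obtain ⟨ihθ, ihP⟩ := ih
    have hDK : D *ᵥ K (k + 1) = 0 := by
      rw [hK k, mulVec_smul, mulVec_mulVec, ihP, zero_mulVec, smul_zero]
    refine ⟨?_, ?_⟩
    · rw [hθ k, mulVec_add, ihθ, mulVec_smul, hDK, smul_zero, add_zero]
    · rw [hP k, ← Matrix.mul_assoc, Matrix.mul_sub, Matrix.mul_one, mul_vecMulVec, hDK,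
        zero_vecMulVec, sub_zero, ihP]

end RecursiveLeastSquares

theorem fromBlocks_one_kronecker_mulVec_sumElim_vec {R l m n p : Type*} [Semiring R]
    [Fintype m] [Fintype n] [Fintype p] [DecidableEq n] [DecidableEq p]
    (S : Matrix l m R) (A : Matrix m n R) (B : Matrix m p R) :
    fromBlocks ((1 : Matrix n n R) ⊗ₖ S) 0 0 ((1 : Matrix p p R) ⊗ₖ S) *ᵥ
        Sum.elim (Matrix.vec A) (Matrix.vec B) =
      Sum.elim (Matrix.vec (S * A)) (Matrix.vec (S * B)) := by
  rw [fromBlocks_mulVec, vec_mul_eq_mulVec, vec_mul_eq_mulVec]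
  simp

theorem stmt_17_general {n p nr : ℕ}
    (S : Matrix (Fin nr) (Fin n) ℝ)
    (D : Matrix ((Fin n × Fin nr) ⊕ (Fin p × Fin nr)) ((Fin n × Fin n) ⊕ (Fin p × Fin n)) ℝ)
    (hD : D = Matrix.fromBlocks
        ((1 : Matrix (Fin n) (Fin n) ℝ) ⊗ₖ S) 0
        0 ((1 : Matrix (Fin p) (Fin p) ℝ) ⊗ₖ S))
    (d : (Fin n × Fin nr) ⊕ (Fin p × Fin nr) → ℝ)
    (hd : d = Sum.elim (_root_.vec S) (_root_.vec (0 : Matrix (Fin nr) (Fin p) ℝ)))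
    (θ : ℕ → (Fin n × Fin n) ⊕ (Fin p × Fin n) → ℝ)
    (P : ℕ → Matrix ((Fin n × Fin n) ⊕ (Fin p × Fin n))
      ((Fin n × Fin n) ⊕ (Fin p × Fin n)) ℝ)
    (K : ℕ → (Fin n × Fin n) ⊕ (Fin p × Fin n) → ℝ)
    (ψ : ℕ → (Fin n × Fin n) ⊕ (Fin p × Fin n) → ℝ) (z : ℕ → ℝ)
    (hθ0 : D.mulVec (θ 0) = d) (hP0 : D * P 0 = 0)
    (hK : ∀ k, K (k + 1) = (ψ k ⬝ᵥ (P k).mulVec (ψ k) + 1)⁻¹ • (P k).mulVec (ψ k))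
    (hθ : ∀ k, θ (k + 1) = θ k + (z (k + 1) - ψ k ⬝ᵥ θ k) • K (k + 1))
    (hP : ∀ k, P (k + 1) = (1 - vecMulVec (K (k + 1)) (ψ k)) * P k)
    (Ahat : ℕ → Matrix (Fin n) (Fin n) ℝ)
    (hAhat : ∀ k, Ahat k = Matrix.of fun i j => θ k (Sum.inl (j, i)))
    (Bhat : ℕ → Matrix (Fin n) (Fin p) ℝ)
    (hBhat : ∀ k, Bhat k = Matrix.of fun i j => θ k (Sum.inr (j, i))) :
    ∀ k, S * Ahat k = S ∧ S * Bhat k = 0 := by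
  intro k
  have hθk : θ k = Sum.elim (Matrix.vec (Ahat k)) (Matrix.vec (Bhat k)) := by
    ext (⟨j, i⟩ | ⟨j, i⟩) <;> simp [hAhat, hBhat, flip]
  have hconstr := (rls_mulVec_eq_and_mul_eq_zero D d θ K ψ P z hθ0 hP0 hK hθ hP k).1
  rw [hθk, hD, hd, fromBlocks_one_kronecker_mulVec_sumElim_vec] at hconstr
  exact ⟨vec_inj.1 (congrArg (· ∘ Sum.inl) hconstr), vec_inj.1 (congrArg (· ∘ Sum.inr) hconstr)⟩

/-- If the recursive least-squares iteration on the vectorized parameters is initialized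
compatibly with the vectorized constraint `Dθ = d` built from `S`, then every intermediate
estimate, un-vectorized as `θ̂_k = [vec Â_k; vec B̂_k]`, yields state matrices satisfying
`S Â_k = S` and `S B̂_k = 0`; i.e. a model compatible with the constraint `Sx = s`. -/
theorem stmt_17 {n p nr : ℕ}
    (S : Matrix (Fin nr) (Fin n) ℝ)
    (D : Matrix ((Fin n × Fin nr) ⊕ (Fin p × Fin nr)) ((Fin n × Fin n) ⊕ (Fin p × Fin n)) ℝ)
    (hD : D = Matrix.fromBlocks
        ((1 : Matrix (Fin n) (Fin n) ℝ) ⊗ₖ S) 0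
        0 ((1 : Matrix (Fin p) (Fin p) ℝ) ⊗ₖ S))
    (d : (Fin n × Fin nr) ⊕ (Fin p × Fin nr) → ℝ)
    (hd : d = Sum.elim (_root_.vec S) (_root_.vec (0 : Matrix (Fin nr) (Fin p) ℝ)))
    (θ : ℕ → (Fin n × Fin n) ⊕ (Fin p × Fin n) → ℝ)
    (P : ℕ → Matrix ((Fin n × Fin n) ⊕ (Fin p × Fin n))
      ((Fin n × Fin n) ⊕ (Fin p × Fin n)) ℝ)
    (K : ℕ → (Fin n × Fin n) ⊕ (Fin p × Fin n) → ℝ)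
    (ψ : ℕ → (Fin n × Fin n) ⊕ (Fin p × Fin n) → ℝ) (z : ℕ → ℝ)
    (hθ0 : D.mulVec (θ 0) = d) (hP0 : D * P 0 = 0)
    (hden : ∀ k, ψ k ⬝ᵥ (P k).mulVec (ψ k) + 1 ≠ 0)
    (hK : ∀ k, K (k + 1) = (ψ k ⬝ᵥ (P k).mulVec (ψ k) + 1)⁻¹ • (P k).mulVec (ψ k))
    (hθ : ∀ k, θ (k + 1) = θ k + (z (k + 1) - ψ k ⬝ᵥ θ k) • K (k + 1))
    (hP : ∀ k, P (k + 1) = (1 - vecMulVec (K (k + 1)) (ψ k)) * P k)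
    (Ahat : ℕ → Matrix (Fin n) (Fin n) ℝ)
    (hAhat : ∀ k, Ahat k = Matrix.of fun i j => θ k (Sum.inl (j, i)))
    (Bhat : ℕ → Matrix (Fin n) (Fin p) ℝ)
    (hBhat : ∀ k, Bhat k = Matrix.of fun i j => θ k (Sum.inr (j, i))) :
    ∀ k, S * Ahat k = S ∧ S * Bhat k = 0 :=
  stmt_17_general S D hD d hd θ P K ψ z hθ0 hP0 hK hθ hP Ahat hAhat Bhat hBhat
end
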